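/- arXiv:1408.5391 — 2 statements merged into one kernel-verified Lean document; each statement's English description precedes it below -/
import Mathlib

section
/- For every integer n ≥ 1, the rank generating function of the order ideals of P_n satisfies F(J(P_n),q) = ∏_{j=1}^{n−1} (1+q^j), as polynomials in ℤ[q]. -/
open scoped Classical

noncomputable section

/-- `W2 n` is the set `{(a,b) ∈ ℤ≥0² : a + b ≤ n - 2}`. -/
def W2 (n : ℕ) : Finset (ℤ × ℤ) :=
  (Finset.Icc (0:ℤ) (n:ℤ) ×ˢ Finset.Icc (0:ℤ) (n:ℤ)).filter
    (fun p => p.1 + p.2 ≤ (n:ℤ) - 2)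

/-- One step: add a vector of `S`, staying inside `W`. -/
def step2 (S : Set (ℤ × ℤ)) (W : Finset (ℤ × ℤ)) (u v : ℤ × ℤ) : Prop :=
  u ∈ W ∧ v ∈ W ∧ ∃ e ∈ S, v = u + e

/-- The order relation: reflexive-transitive closure of `step2`, restricted to `W`. -/
def le2 (S : Set (ℤ × ℤ)) (W : Finset (ℤ × ℤ)) (u v : ℤ × ℤ) : Prop :=
  u ∈ W ∧ v ∈ W ∧ Relation.ReflTransGen (step2 S W) u v

/-- An order ideal: a downward closed subset of `W`. -/
def IsIdeal2 (S : Set (ℤ × ℤ)) (W : Finset (ℤ × ℤ)) (I : Finset (ℤ × ℤ)) : Prop :=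
  I ⊆ W ∧ ∀ u v : ℤ × ℤ, le2 S W u v → v ∈ I → u ∈ I

/-- The set of all order ideals. -/
def ideals2 (S : Set (ℤ × ℤ)) (W : Finset (ℤ × ℤ)) : Finset (Finset (ℤ × ℤ)) :=
  W.powerset.filter (fun I => IsIdeal2 S W I)

/-- The step vectors of the poset `P_n`: r = (1,0), g = (0,1), b = (-1,1). -/
def Pvec : Set (ℤ × ℤ) := {(1,0), (0,1), (-1,1)}

/-- The step vectors of the poset `P_n({b,g})`: g = (0,1), b = (-1,1). -/
def BGvec : Set (ℤ × ℤ) := {(0,1), (-1,1)}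

/-- The rank generating function `F(J(P),q) = Σ_{I ∈ J(P)} q^{|I|}`. -/
def genF2 (S : Set (ℤ × ℤ)) (W : Finset (ℤ × ℤ)) : Polynomial ℤ :=
  ∑ I ∈ ideals2 S W, Polynomial.X ^ I.card

/-- column-count function from a finite set of parts -/
def cZ (T : Finset ℕ) (a : ℤ) : ℕ := (T.filter (fun x : ℕ => a < (x:ℤ))).card

def idealOf (n : ℕ) (T : Finset ℕ) : Finset (ℤ × ℤ) :=
  (W2 n).filter (fun p => p.2 < (cZ T p.1 : ℤ))

lemma mem_W2 {n : ℕ} {p : ℤ × ℤ} :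
    p ∈ W2 n ↔ (0 ≤ p.1 ∧ p.1 ≤ n) ∧ (0 ≤ p.2 ∧ p.2 ≤ n) ∧ p.1 + p.2 ≤ (n:ℤ) - 2 := by
  simp [W2, Finset.mem_filter, Finset.mem_product, Finset.mem_Icc, and_assoc]

lemma cZ_anti (T : Finset ℕ) {a b : ℤ} (h : a ≤ b) : cZ T b ≤ cZ T a := by
  apply Finset.card_le_card
  intro x hx
  rcases Finset.mem_filter.mp hx with ⟨h1,h2⟩
  exact Finset.mem_filter.mpr ⟨h1, lt_of_le_of_lt h h2⟩

lemma cZ_pred_le (T : Finset ℕ) (a : ℤ) : cZ T (a - 1) ≤ cZ T a + 1 := by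
  have hsub : T.filter (fun x : ℕ => a - 1 < (x:ℤ)) ⊆ insert a.toNat (T.filter (fun x : ℕ => a < (x:ℤ))) := by
    intro x hx
    rcases Finset.mem_filter.mp hx with ⟨hxT, hlt⟩
    by_cases h : a < (x:ℤ)
    · exact Finset.mem_insert_of_mem (Finset.mem_filter.mpr ⟨hxT, h⟩)
    · push_neg at h
      have hax : (x:ℤ) = a := le_antisymm h (by omega)
      have : x = a.toNat := by omega
      simp [this]
  calc cZ T (a-1) ≤ (insert a.toNat (T.filter (fun x : ℕ => a < (x:ℤ)))).card := Finset.card_le_card hsub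
    _ ≤ cZ T a + 1 := by
        rw [cZ]
        exact Finset.card_insert_le _ _

lemma cZ_pred (T : Finset ℕ) (x : ℕ) :
    cZ T ((x:ℤ) - 1) = cZ T x + (if x ∈ T then 1 else 0) := by
  have hset : T.filter (fun y : ℕ => (x:ℤ) - 1 < (y:ℤ))
      = T.filter (fun y : ℕ => (x:ℤ) < (y:ℤ)) ∪ T.filter (fun y : ℕ => y = x) := by
    rw [← Finset.filter_or]
    apply Finset.filter_congr
    intro y _
    constructor
    · intro h
      by_cases hxy : (x:ℤ) < (y:ℤ)
      · exact Or.inl hxy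
      · right; omega
    · intro h; rcases h with h | h
      · omega
      · subst h; omega
  have hdisj : Disjoint (T.filter (fun y : ℕ => (x:ℤ) < (y:ℤ))) (T.filter (fun y : ℕ => y = x)) := by
    rw [Finset.disjoint_left]
    intro y h1 h2
    rcases Finset.mem_filter.mp h1 with ⟨-, hlt⟩
    rcases Finset.mem_filter.mp h2 with ⟨-, heq⟩
    subst heq; omega
  rw [cZ, hset, Finset.card_union_of_disjoint hdisj, Finset.filter_eq']
  rw [cZ]
  split <;> simp

lemma ideal_of_steps {S : Set (ℤ × ℤ)} {W : Finset (ℤ × ℤ)} {I : Finset (ℤ × ℤ)}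
    (hIW : I ⊆ W) (h : ∀ u v, step2 S W u v → v ∈ I → u ∈ I) : IsIdeal2 S W I := by
  refine ⟨hIW, ?_⟩
  intro u v hle hv
  obtain ⟨hu, hvW, hrt⟩ := hle
  clear hvW hu
  induction hrt with
  | refl => exact hv
  | tail hab hbc ih => exact ih (h _ _ hbc hv)

lemma mem_idealOf {n : ℕ} {T : Finset ℕ} {p : ℤ × ℤ} :
    p ∈ idealOf n T ↔ p ∈ W2 n ∧ p.2 < (cZ T p.1 : ℤ) := Finset.mem_filter

lemma idealOf_isIdeal (n : ℕ) (T : Finset ℕ) : IsIdeal2 Pvec (W2 n) (idealOf n T) := by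
  apply ideal_of_steps (Finset.filter_subset _ _)
  rintro u v ⟨huW, hvW, e, heS, hve⟩
  intro hv
  rcases mem_idealOf.mp hv with ⟨-, hvc⟩
  refine mem_idealOf.mpr ⟨huW, ?_⟩
  have hcases : e = (1,0) ∨ e = (0,1) ∨ e = (-1,1) := by
    simpa [Pvec] using heS
  obtain ⟨a, b⟩ := u
  rcases hcases with rfl | rfl | rfl
  · -- v = (a+1, b)
    have h1 : cZ T (a+1) ≤ cZ T a := cZ_anti T (by omega)
    simp only [hve] at hvc ⊢
    simp only [Prod.mk_add_mk, add_zero] at hvc ⊢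
    calc (b:ℤ) < (cZ T (a+1) : ℤ) := hvc
      _ ≤ (cZ T a : ℤ) := by exact_mod_cast h1
  · simp only [hve, Prod.mk_add_mk, add_zero] at hvc ⊢
    omega
  · simp only [hve, Prod.mk_add_mk] at hvc ⊢
    have h1 : cZ T (a + -1) ≤ cZ T a + 1 := by
      have := cZ_pred_le T a
      simpa [sub_eq_add_neg] using this
    omega


lemma cZ_le_sub {n : ℕ} {T : Finset ℕ} (hT : T ⊆ Finset.Icc 1 (n-1)) (a : ℤ)
    (h0 : 0 ≤ a) : cZ T a ≤ (n-1) - a.toNat := by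
  have hsub : T.filter (fun x : ℕ => a < (x:ℤ)) ⊆ Finset.Icc (a.toNat + 1) (n-1) := by
    intro y hy
    rcases Finset.mem_filter.mp hy with ⟨hyT, hlt⟩
    rcases Finset.mem_Icc.mp (hT hyT) with ⟨h1, h2⟩
    refine Finset.mem_Icc.mpr ⟨by omega, h2⟩
  calc cZ T a ≤ (Finset.Icc (a.toNat + 1) (n-1)).card := Finset.card_le_card hsub
    _ = (n-1) - a.toNat := by rw [Nat.card_Icc]; omega

lemma cZ_add_le {n : ℕ} {T : Finset ℕ} (hT : T ⊆ Finset.Icc 1 (n-1)) (a : ℤ)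
    (h0 : 0 ≤ a) (hpos : 0 < cZ T a) : a + cZ T a ≤ (n:ℤ) - 1 := by
  have h1 := cZ_le_sub hT a h0
  have h2 : ∃ y ∈ T, a < (y:ℤ) := by
    rcases Finset.card_pos.mp hpos with ⟨y, hy⟩
    rcases Finset.mem_filter.mp hy with ⟨hyT, hlt⟩
    exact ⟨y, hyT, hlt⟩
  rcases h2 with ⟨y, hyT, hlt⟩
  rcases Finset.mem_Icc.mp (hT hyT) with ⟨hy1, hy2⟩
  omega

lemma inner_filter {n : ℕ} {T : Finset ℕ} (hT : T ⊆ Finset.Icc 1 (n-1)) (a : ℤ)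
    (h0 : 0 ≤ a) :
    (Finset.Icc (0:ℤ) n).filter (fun b => a + b ≤ (n:ℤ)-2 ∧ b < (cZ T a : ℤ))
      = Finset.Ico (0:ℤ) (cZ T a) := by
  ext b
  simp only [Finset.mem_filter, Finset.mem_Icc, Finset.mem_Ico]
  constructor
  · rintro ⟨⟨hb0, hbn⟩, h1, h2⟩
    exact ⟨hb0, h2⟩
  · rintro ⟨hb0, hb⟩
    have hpos : 0 < cZ T a := by omega
    have := cZ_add_le hT a h0 hpos
    omega

lemma card_idealOf {n : ℕ} {T : Finset ℕ} (hT : T ⊆ Finset.Icc 1 (n-1)) :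
    (idealOf n T).card = ∑ x ∈ T, x := by
  have h1 : idealOf n T
      = (Finset.Icc (0:ℤ) n ×ˢ Finset.Icc (0:ℤ) n).filter
          (fun p => (p.1 + p.2 ≤ (n:ℤ)-2) ∧ p.2 < (cZ T p.1 : ℤ)) := by
    rw [idealOf, W2, Finset.filter_filter]
  rw [h1, Finset.card_filter, Finset.sum_product]
  have h2 : ∀ a ∈ Finset.Icc (0:ℤ) n,
      (∑ b ∈ Finset.Icc (0:ℤ) n, if (a + b ≤ (n:ℤ)-2) ∧ b < (cZ T a : ℤ) then 1 else 0)
        = cZ T a := by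
    intro a ha
    rcases Finset.mem_Icc.mp ha with ⟨h0, hn⟩
    rw [← Finset.card_filter, inner_filter hT a h0, Int.card_Ico]
    simp
  rw [Finset.sum_congr rfl h2]
  have h3 : ∀ a ∈ Finset.Icc (0:ℤ) n,
      cZ T a = ∑ x ∈ T, if a < (x:ℤ) then 1 else 0 := by
    intro a _
    rw [cZ, Finset.card_filter]
  rw [Finset.sum_congr rfl h3, Finset.sum_comm]
  apply Finset.sum_congr rfl
  intro x hx
  rcases Finset.mem_Icc.mp (hT hx) with ⟨hx1, hx2⟩
  rw [← Finset.card_filter]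
  have : (Finset.Icc (0:ℤ) n).filter (fun a => a < (x:ℤ)) = Finset.Ico (0:ℤ) x := by
    ext a
    simp only [Finset.mem_filter, Finset.mem_Icc, Finset.mem_Ico]
    constructor
    · rintro ⟨⟨h0, hn⟩, h⟩; exact ⟨h0, h⟩
    · rintro ⟨h0, h⟩; refine ⟨⟨h0, ?_⟩, h⟩; omega
  rw [this, Int.card_Ico]
  omega


lemma mem_idealOf' {n : ℕ} {T : Finset ℕ} (hT : T ⊆ Finset.Icc 1 (n-1)) {a b : ℤ}
    (h0a : 0 ≤ a) (han : a ≤ n) (h0b : 0 ≤ b) (hbn : b ≤ n) :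
    (a, b) ∈ idealOf n T ↔ b < (cZ T a : ℤ) := by
  rw [mem_idealOf]
  constructor
  · rintro ⟨-, h⟩; exact h
  · intro h
    refine ⟨?_, h⟩
    have hpos : 0 < cZ T a := by omega
    have := cZ_add_le hT a h0a hpos
    rw [mem_W2]
    refine ⟨⟨h0a, han⟩, ⟨h0b, hbn⟩, by omega⟩

lemma cZ_eq_of_idealOf_eq {n : ℕ} {T T' : Finset ℕ} (hT : T ⊆ Finset.Icc 1 (n-1))
    (hT' : T' ⊆ Finset.Icc 1 (n-1)) (h : idealOf n T = idealOf n T') {a : ℤ}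
    (h0 : 0 ≤ a) (han : a ≤ n) : cZ T a = cZ T' a := by
  by_contra hne
  wlog hlt : cZ T a < cZ T' a generalizing T T'
  · exact this hT' hT h.symm (Ne.symm hne) (by omega)
  have hb1 := cZ_le_sub hT' a h0
  have hbn : (cZ T a : ℤ) ≤ n := by omega
  have hmem : (a, (cZ T a : ℤ)) ∈ idealOf n T' := by
    rw [mem_idealOf' hT' h0 han (by positivity) hbn]
    exact_mod_cast hlt
  rw [← h, mem_idealOf' hT h0 han (by positivity) hbn] at hmem
  omega

lemma idealOf_injOn {n : ℕ} {T T' : Finset ℕ} (hT : T ⊆ Finset.Icc 1 (n-1))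
    (hT' : T' ⊆ Finset.Icc 1 (n-1)) (h : idealOf n T = idealOf n T') : T = T' := by
  ext y
  have key : ∀ y : ℕ, y ∈ Finset.Icc 1 (n-1) →
      ((y ∈ T) ↔ (y ∈ T')) := by
    intro y hy
    rcases Finset.mem_Icc.mp hy with ⟨hy1, hy2⟩
    have hyn : (y:ℤ) ≤ n := by
      have : y ≤ n - 1 := hy2
      omega
    have e1 : cZ T ((y:ℤ)-1) = cZ T' ((y:ℤ)-1) :=
      cZ_eq_of_idealOf_eq hT hT' h (by omega) (by omega)
    have e2 : cZ T (y:ℤ) = cZ T' (y:ℤ) :=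
      cZ_eq_of_idealOf_eq hT hT' h (by positivity) hyn
    have p1 := cZ_pred T y
    have p2 := cZ_pred T' y
    by_cases h1 : y ∈ T <;> by_cases h2 : y ∈ T' <;>
      simp [h1, h2] at p1 p2 ⊢ <;> omega
  constructor
  · intro hyT; exact (key y (hT hyT)).mp hyT
  · intro hyT'; exact (key y (hT' hyT')).mpr hyT'


def colI (n : ℕ) (I : Finset (ℤ × ℤ)) (a : ℤ) : ℕ :=
  ((Finset.Icc (0:ℤ) n).filter (fun b => (a, b) ∈ I)).card

section Surj

variable {n : ℕ} {I : Finset (ℤ × ℤ)}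
variable (hIW : I ⊆ W2 n)
variable (hcl : ∀ u v, step2 Pvec (W2 n) u v → v ∈ I → u ∈ I)

include hIW hcl

lemma cl_g : ∀ a b : ℤ, (a, b+1) ∈ I → (a, b) ∈ W2 n → (a, b) ∈ I := by
  intro a b h hw
  exact hcl (a,b) (a,b+1) ⟨hw, hIW h, (0,1), by simp [Pvec], by simp [Prod.ext_iff]⟩ h

lemma cl_r : ∀ a b : ℤ, (a+1, b) ∈ I → (a, b) ∈ W2 n → (a, b) ∈ I := by
  intro a b h hw
  exact hcl (a,b) (a+1,b) ⟨hw, hIW h, (1,0), by simp [Pvec], by simp [Prod.ext_iff]⟩ h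

lemma cl_b : ∀ a b : ℤ, (a-1, b+1) ∈ I → (a, b) ∈ W2 n → (a, b) ∈ I := by
  intro a b h hw
  refine hcl (a,b) (a-1,b+1) ⟨hw, hIW h, (-1,1), by simp [Pvec], by simp [Prod.ext_iff]; omega⟩ h

lemma cl_down : ∀ a b b' : ℤ, 0 ≤ b' → b' ≤ b → (a, b) ∈ I → (a, b') ∈ I := by
  have key : ∀ k : ℕ, ∀ a b : ℤ, 0 ≤ b - k → (a, b) ∈ I → (a, b - k) ∈ I := by
    intro k
    induction k with
    | zero => intro a b _ h; simpa using h
    | succ k ih =>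
      intro a b hk h
      have h1 : (a, b - k) ∈ I := ih a b (by omega) h
      have hw1 := mem_W2.mp (hIW h1)
      have hw : (a, b - (k+1)) ∈ W2 n := by
        rw [mem_W2]
        simp only at hw1 ⊢
        push_cast at hk ⊢
        refine ⟨hw1.1, ⟨by omega, by omega⟩, by omega⟩
      have := cl_g hIW hcl a (b - (k+1)) (by convert h1 using 2; push_cast; ring) hw
      convert this using 2; omega
  intro a b b' h0 hle h
  have := key (b - b').toNat a b (by omega) h
  convert this using 2
  omega

lemma mem_iff_lt_colI : ∀ a b : ℤ, 0 ≤ b → ((a, b) ∈ I ↔ b < (colI n I a : ℤ)) := by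
  intro a b h0
  constructor
  · intro h
    have hw := mem_W2.mp (hIW h)
    have hsub : Finset.Icc (0:ℤ) b ⊆ (Finset.Icc (0:ℤ) n).filter (fun b' => (a, b') ∈ I) := by
      intro b'' hb''
      rcases Finset.mem_Icc.mp hb'' with ⟨h1, h2⟩
      refine Finset.mem_filter.mpr ⟨Finset.mem_Icc.mpr ⟨h1, ?_⟩, cl_down hIW hcl a b b'' h1 h2 h⟩
      have := hw.2.1.2
      omega
    have := Finset.card_le_card hsub
    rw [Int.card_Icc] at this
    rw [colI]
    omega
  · intro h
    by_contra hnot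
    have hsub : (Finset.Icc (0:ℤ) n).filter (fun b' => (a, b') ∈ I) ⊆ Finset.Icc 0 (b-1) := by
      intro b'' hb''
      rcases Finset.mem_filter.mp hb'' with ⟨hb''n, hmem⟩
      rcases Finset.mem_Icc.mp hb''n with ⟨h1, h2⟩
      refine Finset.mem_Icc.mpr ⟨h1, ?_⟩
      by_contra hgt
      exact hnot (cl_down hIW hcl a b'' b h0 (by omega) hmem)
    have := Finset.card_le_card hsub
    rw [Int.card_Icc] at this
    rw [colI] at h
    omega

lemma colI_mono : ∀ a : ℤ, 0 ≤ a → colI n I (a+1) ≤ colI n I a := by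
  intro a ha
  apply Finset.card_le_card
  intro b hb
  rcases Finset.mem_filter.mp hb with ⟨hbn, hmem⟩
  refine Finset.mem_filter.mpr ⟨hbn, ?_⟩
  have hw := mem_W2.mp (hIW hmem)
  apply cl_r hIW hcl a b hmem
  rw [mem_W2]
  simp only at hw ⊢
  refine ⟨⟨ha, by omega⟩, hw.2.1, by omega⟩

lemma colI_le_succ : ∀ a : ℤ, 0 ≤ a → colI n I a ≤ colI n I (a+1) + 1 := by
  intro a ha
  by_contra hgt
  push_neg at hgt
  have hb : ((colI n I a : ℤ) - 1) < colI n I a := by omega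
  have h1 : (a, (colI n I a : ℤ) - 1) ∈ I :=
    (mem_iff_lt_colI hIW hcl a _ (by omega)).mpr hb
  have hw := mem_W2.mp (hIW h1)
  simp only at hw
  have h2 : (a+1, (colI n I a : ℤ) - 2) ∈ I := by
    apply cl_b hIW hcl
    · show (a + 1 - 1, (colI n I a : ℤ) - 2 + 1) ∈ I
      convert h1 using 2 <;> ring
    · rw [mem_W2]
      refine ⟨⟨by omega, by omega⟩, ⟨by omega, by omega⟩, by omega⟩
  have := (mem_iff_lt_colI hIW hcl (a+1) _ (by omega)).mp h2
  omega

lemma colI_zero : ∀ a : ℤ, (n:ℤ) - 1 ≤ a → colI n I a = 0 := by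
  intro a ha
  rw [colI, Finset.card_eq_zero, Finset.filter_eq_empty_iff]
  intro b hb hmem
  have hw := mem_W2.mp (hIW hmem)
  simp only at hw
  omega

end Surj


lemma exists_T {n : ℕ} (hn : 1 ≤ n) {I : Finset (ℤ × ℤ)}
    (hI : I ∈ ideals2 Pvec (W2 n)) :
    ∃ T ∈ (Finset.Icc 1 (n-1)).powerset, I = idealOf n T := by
  rcases Finset.mem_filter.mp hI with ⟨hpow, hIdeal⟩
  have hIW : I ⊆ W2 n := Finset.mem_powerset.mp hpow
  have hcl : ∀ u v, step2 Pvec (W2 n) u v → v ∈ I → u ∈ I := by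
    intro u v hs hv
    exact hIdeal.2 u v ⟨hs.1, hs.2.1, Relation.ReflTransGen.single hs⟩ hv
  set T : Finset ℕ := (Finset.Icc 1 (n-1)).filter
      (fun x : ℕ => colI n I (x:ℤ) < colI n I ((x:ℤ)-1)) with hTdef
  have hT : T ⊆ Finset.Icc 1 (n-1) := Finset.filter_subset _ _
  have hcast : ((n - 1 : ℕ) : ℤ) = (n:ℤ) - 1 := by omega
  have high : ∀ a : ℤ, 0 ≤ a → (n:ℤ) - 1 ≤ a → cZ T a = colI n I a := by
    intro a h0 ha
    rw [colI_zero hIW hcl a ha]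
    rw [cZ, Finset.card_eq_zero, Finset.filter_eq_empty_iff]
    intro x hx
    rcases Finset.mem_Icc.mp (hT hx) with ⟨-, h2⟩
    have : (x:ℤ) ≤ (n:ℤ) - 1 := by omega
    omega
  have key : ∀ k : ℕ, ∀ a : ℤ, 0 ≤ a → (n:ℤ) - 1 ≤ a + k → cZ T a = colI n I a := by
    intro k
    induction k with
    | zero => intro a h0 ha; exact high a h0 (by simpa using ha)
    | succ k ih =>
      intro a h0 ha
      by_cases hhigh : (n:ℤ) - 1 ≤ a
      · exact high a h0 hhigh
      push_neg at hhigh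
      have ih1 : cZ T (a+1) = colI n I (a+1) := ih (a+1) (by omega) (by push_cast; push_cast at ha; omega)
      set x : ℕ := a.toNat + 1 with hxdef
      have hxa : (x:ℤ) = a + 1 := by omega
      have hp := cZ_pred T x
      rw [hxa] at hp
      simp only [add_sub_cancel_right] at hp
      have hmemT : x ∈ T ↔ colI n I (a+1) < colI n I a := by
        rw [hTdef, Finset.mem_filter, Finset.mem_Icc, hxa]
        simp only [add_sub_cancel_right]
        constructor
        · rintro ⟨-, h⟩; exact h
        · intro h
          refine ⟨⟨by omega, by omega⟩, h⟩
      have hm1 := colI_mono hIW hcl a h0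
      have hm2 := colI_le_succ hIW hcl a h0
      by_cases hlt : colI n I (a+1) < colI n I a
      · rw [if_pos (hmemT.mpr hlt)] at hp
        omega
      · rw [if_neg (fun hc => hlt (hmemT.mp hc))] at hp
        omega
  have ceq : ∀ a : ℤ, 0 ≤ a → cZ T a = colI n I a := by
    intro a h0
    exact key ((n:ℤ) - 1 - a).toNat a h0 (by omega)
  refine ⟨T, Finset.mem_powerset.mpr hT, ?_⟩
  ext p
  obtain ⟨a, b⟩ := p
  constructor
  · intro h
    have hw := mem_W2.mp (hIW h)
    simp only at hw
    refine mem_idealOf.mpr ⟨hIW h, ?_⟩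
    show (b:ℤ) < (cZ T a : ℤ)
    rw [ceq a hw.1.1]
    exact (mem_iff_lt_colI hIW hcl a b hw.2.1.1).mp h
  · intro h
    rcases mem_idealOf.mp h with ⟨hw', hlt⟩
    have hw := mem_W2.mp hw'
    simp only at hw hlt
    rw [ceq a hw.1.1] at hlt
    exact (mem_iff_lt_colI hIW hcl a b hw.2.1.1).mpr hlt

lemma ideals2_eq (n : ℕ) (hn : 1 ≤ n) :
    ideals2 Pvec (W2 n) = (Finset.Icc 1 (n-1)).powerset.image (idealOf n) := by
  ext I
  constructor
  · intro hI
    rcases exists_T hn hI with ⟨T, hT, rfl⟩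
    exact Finset.mem_image.mpr ⟨T, hT, rfl⟩
  · intro hI
    rcases Finset.mem_image.mp hI with ⟨T, hT, rfl⟩
    refine Finset.mem_filter.mpr ⟨Finset.mem_powerset.mpr (Finset.filter_subset _ _), ?_⟩
    exact idealOf_isIdeal n T

end

/-- The rank generating function of `J(P_n)` is `∏_{j=1}^{n-1} (1 + q^j)`. -/
theorem stmt1 (n : ℕ) (hn : 1 ≤ n) :
    genF2 Pvec (W2 n) = ∏ j ∈ Finset.Icc 1 (n - 1), (1 + Polynomial.X ^ j) := by
  rw [genF2, ideals2_eq n hn]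
  rw [Finset.sum_image (fun T hT T' hT' h =>
    idealOf_injOn (Finset.mem_powerset.mp hT) (Finset.mem_powerset.mp hT') h)]
  have hcard : ∀ T ∈ (Finset.Icc 1 (n-1)).powerset,
      (Polynomial.X : Polynomial ℤ) ^ (idealOf n T).card = Polynomial.X ^ (∑ x ∈ T, x) := by
    intro T hT
    rw [card_idealOf (Finset.mem_powerset.mp hT)]
  rw [Finset.sum_congr rfl hcard]
  have : ∀ j ∈ Finset.Icc 1 (n-1), (1 + (Polynomial.X:Polynomial ℤ) ^ j) = Polynomial.X ^ j + 1 := by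
    intro j _; ring
  rw [Finset.prod_congr rfl this, Finset.prod_add]
  apply Finset.sum_congr rfl
  intro T hT
  rw [Finset.prod_const_one, mul_one, Finset.prod_pow_eq_pow_sum]
end

section
/- For every integer n ≥ 1, the rank generating function of the order ideals of the two-color tetrahedral poset T_n({g,o}) is the product of Gaussian binomial coefficients ∏_{j=1}^{n} [n choose j]_q; equivalently, as polynomials in ℤ[q], F(J(T_n({g,o})),q) · ∏_{j=1}^{n} ([j]_q! · [n−j]_q!) = ([n]_q!)^n. -/
open scoped Classical

noncomputable section

/-- `V3 n` is the set `{(a,b,c) ∈ ℤ≥0³ : a + b + c ≤ n - 2}`. -/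
def V3 (n : ℕ) : Finset (ℤ × ℤ × ℤ) :=
  ((Finset.Icc (0:ℤ) (n:ℤ) ×ˢ Finset.Icc (0:ℤ) (n:ℤ) ×ˢ Finset.Icc (0:ℤ) (n:ℤ)).filter
    (fun p => p.1 + p.2.1 + p.2.2 ≤ (n:ℤ) - 2))

/-- The six edge vectors. -/
def vr : ℤ × ℤ × ℤ := (1,0,0)
def vg : ℤ × ℤ × ℤ := (0,1,0)
def vy : ℤ × ℤ × ℤ := (0,0,1)
def vb : ℤ × ℤ × ℤ := (-1,1,0)
def vo : ℤ × ℤ × ℤ := (-1,0,1)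
def vs : ℤ × ℤ × ℤ := (0,1,-1)

/-- One step: add a vector of `S`, staying inside `W`. -/
def step3 (S : Set (ℤ × ℤ × ℤ)) (W : Finset (ℤ × ℤ × ℤ)) (u v : ℤ × ℤ × ℤ) : Prop :=
  u ∈ W ∧ v ∈ W ∧ ∃ e ∈ S, v = u + e

/-- The order relation of `T_n(S)`: reflexive-transitive closure of `step3`,
restricted to `W`. -/
def le3 (S : Set (ℤ × ℤ × ℤ)) (W : Finset (ℤ × ℤ × ℤ)) (u v : ℤ × ℤ × ℤ) : Prop :=
  u ∈ W ∧ v ∈ W ∧ Relation.ReflTransGen (step3 S W) u v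

/-- An order ideal: a downward closed subset of `W`. -/
def IsIdeal3 (S : Set (ℤ × ℤ × ℤ)) (W : Finset (ℤ × ℤ × ℤ))
    (I : Finset (ℤ × ℤ × ℤ)) : Prop :=
  I ⊆ W ∧ ∀ u v : ℤ × ℤ × ℤ, le3 S W u v → v ∈ I → u ∈ I

/-- The set of all order ideals of `T_n(S)`. -/
def ideals3 (S : Set (ℤ × ℤ × ℤ)) (W : Finset (ℤ × ℤ × ℤ)) :
    Finset (Finset (ℤ × ℤ × ℤ)) :=
  W.powerset.filter (fun I => IsIdeal3 S W I)

/-- The rank generating function `F(J(T_n(S)),q) = Σ_{I} q^{|I|}`. -/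
def genF3 (S : Set (ℤ × ℤ × ℤ)) (W : Finset (ℤ × ℤ × ℤ)) : Polynomial ℤ :=
  ∑ I ∈ ideals3 S W, Polynomial.X ^ I.card

/-- `[i]_q = 1 + q + ⋯ + q^{i-1}`. -/
def qInt (i : ℕ) : Polynomial ℤ := ∑ t ∈ Finset.range i, Polynomial.X ^ t

/-- The q-factorial `[j]_q! = ∏_{i=1}^{j} [i]_q`. -/
def qFact (j : ℕ) : Polynomial ℤ := ∏ i ∈ Finset.Icc 1 j, qInt i

end

noncomputable section AuxLemmas

open Polynomial Finset

lemma mem_ideals3 {S : Set (ℤ×ℤ×ℤ)} {W : Finset (ℤ×ℤ×ℤ)} {I : Finset (ℤ×ℤ×ℤ)} :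
    I ∈ ideals3 S W ↔ IsIdeal3 S W I := by
  unfold ideals3
  simp only [Finset.mem_filter, Finset.mem_powerset]
  exact ⟨fun h => h.2, fun h => ⟨h.1, h⟩⟩

lemma isIdeal3_iff_step (S : Set (ℤ×ℤ×ℤ)) (W : Finset (ℤ×ℤ×ℤ)) (I : Finset (ℤ×ℤ×ℤ)) :
    IsIdeal3 S W I ↔ I ⊆ W ∧ ∀ u v, step3 S W u v → v ∈ I → u ∈ I := by
  constructor
  · rintro ⟨hIW, h⟩
    exact ⟨hIW, fun u v hst hv =>
      h u v ⟨hst.1, hst.2.1, Relation.ReflTransGen.single hst⟩ hv⟩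
  · rintro ⟨hIW, h⟩
    refine ⟨hIW, fun u v hle hv => ?_⟩
    obtain ⟨hu, hvW, hr⟩ := hle
    clear hu hvW
    induction hr using Relation.ReflTransGen.head_induction_on with
    | refl => exact hv
    | head hst _ ih => exact h _ _ hst ih

lemma ideals3_empty (S : Set (ℤ×ℤ×ℤ)) : ideals3 S ∅ = {∅} := by
  ext I
  simp only [mem_ideals3, Finset.mem_singleton]
  constructor
  · rintro ⟨hsub, -⟩
    exact Finset.subset_empty.mp hsub
  · rintro rfl
    exact ⟨Finset.Subset.refl _, fun u v _ hv => absurd hv (Finset.notMem_empty v)⟩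

lemma genF3_empty (S : Set (ℤ×ℤ×ℤ)) : genF3 S ∅ = 1 := by
  rw [genF3, ideals3_empty]
  simp

lemma genF3_split (S : Set (ℤ×ℤ×ℤ)) (A B : Finset (ℤ×ℤ×ℤ)) (hd : Disjoint A B)
    (hstep : ∀ u v, step3 S (A ∪ B) u v → (u ∈ A ↔ v ∈ A)) :
    genF3 S (A ∪ B) = genF3 S A * genF3 S B := by
  set W := A ∪ B with hW
  have hstepB : ∀ u v, step3 S W u v → (u ∈ B ↔ v ∈ B) := by
    intro u v h
    have h1 := hstep u v h
    have hu := h.1; have hv := h.2.1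
    rw [hW, Finset.mem_union] at hu hv
    have hdl := Finset.disjoint_left.mp hd
    constructor
    · intro hub
      rcases hv with hva | hvb
      · exact absurd (h1.mpr hva) (fun hua => hdl hua hub)
      · exact hvb
    · intro hvb
      rcases hu with hua | hub
      · exact absurd (h1.mp hua) (fun hva => hdl hva hvb)
      · exact hub
  have stepUpA : ∀ u v, step3 S A u v → step3 S W u v := fun u v h =>
    ⟨Finset.mem_union_left _ h.1, Finset.mem_union_left _ h.2.1, h.2.2⟩
  have stepUpB : ∀ u v, step3 S B u v → step3 S W u v := fun u v h =>
    ⟨Finset.mem_union_right _ h.1, Finset.mem_union_right _ h.2.1, h.2.2⟩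
  have stepDownA : ∀ u v, u ∈ A → step3 S W u v → step3 S A u v := by
    intro u v hu h
    exact ⟨hu, (hstep u v h).mp hu, h.2.2⟩
  have stepDownB : ∀ u v, u ∈ B → step3 S W u v → step3 S B u v := by
    intro u v hu h
    exact ⟨hu, (hstepB u v h).mp hu, h.2.2⟩
  have rtgDownA : ∀ u v, Relation.ReflTransGen (step3 S W) u v → u ∈ A →
      Relation.ReflTransGen (step3 S A) u v := by
    intro u v h
    induction h using Relation.ReflTransGen.head_induction_on with
    | refl => intro _; exact Relation.ReflTransGen.refl
    | head hst _ ih =>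
      intro ha
      exact Relation.ReflTransGen.head (stepDownA _ _ ha hst) (ih ((hstep _ _ hst).mp ha))
  have rtgDownB : ∀ u v, Relation.ReflTransGen (step3 S W) u v → u ∈ B →
      Relation.ReflTransGen (step3 S B) u v := by
    intro u v h
    induction h using Relation.ReflTransGen.head_induction_on with
    | refl => intro _; exact Relation.ReflTransGen.refl
    | head hst _ ih =>
      intro ha
      exact Relation.ReflTransGen.head (stepDownB _ _ ha hst) (ih ((hstepB _ _ hst).mp ha))
  have idealA : ∀ I, IsIdeal3 S W I → IsIdeal3 S A (I ∩ A) := by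
    rintro I ⟨hsub, hcl⟩
    refine ⟨Finset.inter_subset_right, ?_⟩
    rintro u v ⟨huA, hvA, hr⟩ hv
    have hrW : Relation.ReflTransGen (step3 S W) u v :=
      Relation.ReflTransGen.mono (fun x y h => stepUpA x y h) _ _ hr
    have : u ∈ I := hcl u v ⟨Finset.mem_union_left _ huA, Finset.mem_union_left _ hvA, hrW⟩
      (Finset.mem_of_mem_inter_left hv)
    exact Finset.mem_inter.mpr ⟨this, huA⟩
  have idealB : ∀ I, IsIdeal3 S W I → IsIdeal3 S B (I ∩ B) := by
    rintro I ⟨hsub, hcl⟩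
    refine ⟨Finset.inter_subset_right, ?_⟩
    rintro u v ⟨huA, hvA, hr⟩ hv
    have hrW : Relation.ReflTransGen (step3 S W) u v :=
      Relation.ReflTransGen.mono (fun x y h => stepUpB x y h) _ _ hr
    have : u ∈ I := hcl u v ⟨Finset.mem_union_right _ huA, Finset.mem_union_right _ hvA, hrW⟩
      (Finset.mem_of_mem_inter_left hv)
    exact Finset.mem_inter.mpr ⟨this, huA⟩
  have idealU : ∀ J K, IsIdeal3 S A J → IsIdeal3 S B K → IsIdeal3 S W (J ∪ K) := by
    intro J K hJ hK
    rw [isIdeal3_iff_step]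
    constructor
    · exact Finset.union_subset_union hJ.1 hK.1
    · intro u v hst hv
      rcases Finset.mem_union.mp hv with hvJ | hvK
      · have hvA : v ∈ A := hJ.1 hvJ
        have huA : u ∈ A := (hstep u v hst).mpr hvA
        have : u ∈ J := hJ.2 u v ⟨huA, hvA, Relation.ReflTransGen.single
          (stepDownA u v huA hst)⟩ hvJ
        exact Finset.mem_union_left _ this
      · have hvB : v ∈ B := hK.1 hvK
        have huB : u ∈ B := (hstepB u v hst).mpr hvB
        have : u ∈ K := hK.2 u v ⟨huB, hvB, Relation.ReflTransGen.single
          (stepDownB u v huB hst)⟩ hvK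
        exact Finset.mem_union_right _ this
  rw [genF3, genF3, genF3, Finset.sum_mul_sum]
  rw [← Finset.sum_product']
  refine Finset.sum_nbij' (fun I => (I ∩ A, I ∩ B)) (fun p => p.1 ∪ p.2) ?_ ?_ ?_ ?_ ?_
  · intro I hI
    rw [mem_ideals3] at hI
    rw [Finset.mem_product]
    exact ⟨mem_ideals3.mpr (idealA I hI), mem_ideals3.mpr (idealB I hI)⟩
  · intro p hp
    rw [Finset.mem_product, mem_ideals3, mem_ideals3] at hp
    exact mem_ideals3.mpr (idealU _ _ hp.1 hp.2)
  · intro I hI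
    rw [mem_ideals3] at hI
    ext x
    simp only [Finset.mem_union, Finset.mem_inter]
    constructor
    · rintro (⟨h, -⟩ | ⟨h, -⟩) <;> exact h
    · intro hx
      rcases Finset.mem_union.mp (hI.1 hx) with h | h
      · exact Or.inl ⟨hx, h⟩
      · exact Or.inr ⟨hx, h⟩
  · rintro ⟨J, K⟩ hp
    rw [Finset.mem_product, mem_ideals3, mem_ideals3] at hp
    have hJA := hp.1.1; have hKB := hp.2.1
    have hdl := Finset.disjoint_left.mp hd
    simp only [Prod.mk.injEq]
    constructor
    · ext x
      simp only [Finset.mem_inter, Finset.mem_union]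
      constructor
      · rintro ⟨hJK, hA⟩
        rcases hJK with h | h
        · exact h
        · exact absurd (hKB h) (fun hB => hdl hA hB)
      · intro hx; exact ⟨Or.inl hx, hJA hx⟩
    · ext x
      simp only [Finset.mem_inter, Finset.mem_union]
      constructor
      · rintro ⟨hJK, hB⟩
        rcases hJK with h | h
        · exact absurd (hJA h) (fun hA => hdl hA hB)
        · exact h
      · intro hx; exact ⟨Or.inr hx, hKB hx⟩
  · intro I hI
    rw [mem_ideals3] at hI
    have : I = (I ∩ A) ∪ (I ∩ B) := by
      ext x
      simp only [Finset.mem_union, Finset.mem_inter]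
      constructor
      · intro hx
        rcases Finset.mem_union.mp (hI.1 hx) with h | h
        · exact Or.inl ⟨hx, h⟩
        · exact Or.inr ⟨hx, h⟩
      · rintro (⟨h, -⟩ | ⟨h, -⟩) <;> exact h
    have hdisj : Disjoint (I ∩ A) (I ∩ B) :=
      Finset.disjoint_of_subset_left Finset.inter_subset_right
        (Finset.disjoint_of_subset_right Finset.inter_subset_right hd)
    rw [show I.card = (I ∩ A).card + (I ∩ B).card by
      conv_lhs => rw [this]
      exact Finset.card_union_of_disjoint hdisj]
    rw [pow_add]


def gridZ (a b : ℕ) : Finset (ℤ × ℤ) :=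
  Finset.Icc 0 ((a:ℤ)-1) ×ˢ Finset.Icc 0 ((b:ℤ)-1)

lemma mem_gridZ {a b : ℕ} {p : ℤ×ℤ} :
    p ∈ gridZ a b ↔ 0 ≤ p.1 ∧ p.1 < (a:ℤ) ∧ 0 ≤ p.2 ∧ p.2 < (b:ℤ) := by
  simp only [gridZ, Finset.mem_product, Finset.mem_Icc]
  omega

def IsGridIdeal (a b : ℕ) (I : Finset (ℤ×ℤ)) : Prop :=
  I ⊆ gridZ a b ∧ ∀ p ∈ I, ∀ q ∈ gridZ a b, q.1 ≤ p.1 → q.2 ≤ p.2 → q ∈ I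

def gridIdeals (a b : ℕ) : Finset (Finset (ℤ×ℤ)) :=
  (gridZ a b).powerset.filter (fun I => IsGridIdeal a b I)

def Ggen (a b : ℕ) : Polynomial ℤ := ∑ I ∈ gridIdeals a b, Polynomial.X ^ I.card

lemma mem_gridIdeals {a b : ℕ} {I : Finset (ℤ×ℤ)} :
    I ∈ gridIdeals a b ↔ IsGridIdeal a b I := by
  unfold gridIdeals
  simp only [Finset.mem_filter, Finset.mem_powerset]
  exact ⟨fun h => h.2, fun h => ⟨h.1, h⟩⟩

lemma isGridIdeal_of_steps {a b : ℕ} {I : Finset (ℤ×ℤ)} (hI : I ⊆ gridZ a b)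
    (h1 : ∀ x y : ℤ, (x, y) ∈ gridZ a b → (x+1, y) ∈ I → (x,y) ∈ I)
    (h2 : ∀ x y : ℤ, (x, y) ∈ gridZ a b → (x, y+1) ∈ I → (x,y) ∈ I) :
    IsGridIdeal a b I := by
  have A : ∀ d : ℕ, ∀ x y : ℤ, (x,y) ∈ gridZ a b → (x + d, y) ∈ I → (x,y) ∈ I := by
    intro d
    induction d with
    | zero => intro x y _ h; simpa using h
    | succ d ih =>
      intro x y hg h
      apply h1 x y hg
      apply ih (x+1) y
      · have hgrid := hI h
        rw [mem_gridZ] at hg hgrid ⊢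
        simp only at hg hgrid ⊢
        omega
      · have : x + 1 + (d:ℤ) = x + ((d:ℕ)+1 : ℕ) := by push_cast; ring
        rw [this]; exact h
  have B : ∀ e : ℕ, ∀ x y : ℤ, (x,y) ∈ gridZ a b → (x, y + e) ∈ I → (x,y) ∈ I := by
    intro e
    induction e with
    | zero => intro x y _ h; simpa using h
    | succ e ih =>
      intro x y hg h
      apply h2 x y hg
      apply ih x (y+1)
      · have hgrid := hI h
        rw [mem_gridZ] at hg hgrid ⊢
        simp only at hg hgrid ⊢
        omega
      · have : x = x ∧ y + 1 + (e:ℤ) = y + ((e:ℕ)+1 : ℕ) := by constructor; rfl; push_cast; ring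
        rw [show (x, y + 1 + (e:ℤ)) = (x, y + ((e:ℕ)+1 : ℕ)) from by rw [this.2]]
        exact h
  refine ⟨hI, ?_⟩
  intro p hp q hq hq1 hq2
  have hpg := hI hp
  rw [mem_gridZ] at hpg hq
  have hmid : (p.1, q.2) ∈ gridZ a b := by rw [mem_gridZ]; simp only; omega
  have step1 : (p.1, q.2) ∈ I := by
    apply B (p.2 - q.2).toNat p.1 q.2 hmid
    have : q.2 + ((p.2 - q.2).toNat : ℤ) = p.2 := by omega
    rw [this]
    exact hp
  have hqg : (q.1, q.2) ∈ gridZ a b := by rw [mem_gridZ]; simp only; omega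
  have : (q.1, q.2) ∈ I := by
    apply A (p.1 - q.1).toNat q.1 q.2 hqg
    have : q.1 + ((p.1 - q.1).toNat : ℤ) = p.1 := by omega
    rw [this]
    exact step1
  simpa using this

lemma gridZ_zero_left (b : ℕ) : gridZ 0 b = ∅ := by
  ext p; rw [mem_gridZ]; simp; omega

lemma gridZ_zero_right (a : ℕ) : gridZ a 0 = ∅ := by
  ext p; rw [mem_gridZ]; simp

lemma gridIdeals_of_empty {a b : ℕ} (h : gridZ a b = ∅) : gridIdeals a b = {∅} := by
  ext I
  simp only [mem_gridIdeals, Finset.mem_singleton, IsGridIdeal, h]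
  constructor
  · rintro ⟨hsub, -⟩; exact Finset.subset_empty.mp hsub
  · rintro rfl
    exact ⟨Finset.Subset.refl _, fun p hp => absurd hp (Finset.notMem_empty p)⟩

lemma Ggen_zero_left (b : ℕ) : Ggen 0 b = 1 := by
  rw [Ggen, gridIdeals_of_empty (gridZ_zero_left b)]; simp

lemma Ggen_zero_right (a : ℕ) : Ggen a 0 = 1 := by
  rw [Ggen, gridIdeals_of_empty (gridZ_zero_right a)]; simp

lemma Ggen_succ_succ (a b : ℕ) :
    Ggen (a+1) (b+1) =
      Ggen a (b+1) + Polynomial.X ^ (a+1) * Ggen (a+1) b := by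
  classical
  set col : Finset (ℤ×ℤ) := Finset.Icc (0:ℤ) (a:ℤ) ×ˢ ({(0:ℤ)} : Finset ℤ) with hcol
  have mem_col : ∀ q : ℤ×ℤ, q ∈ col ↔ (0 ≤ q.1 ∧ q.1 ≤ (a:ℤ) ∧ q.2 = 0) := by
    intro q; rw [hcol, Finset.mem_product, Finset.mem_Icc, Finset.mem_singleton]; tauto
  have card_col : col.card = a + 1 := by
    rw [hcol, Finset.card_product, Int.card_Icc]
    simp
  -- split the sum according to whether (a, 0) belongs to the ideal
  rw [Ggen, ← Finset.sum_filter_add_sum_filter_not (gridIdeals (a+1) (b+1))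
    (fun I => ((a:ℤ), (0:ℤ)) ∈ I)]
  conv_rhs => rw [add_comm]
  congr 1
  -- ====== ideals containing (a,0): bijective to gridIdeals (a+1) b, shifted by a full column
  · have hdowninj : Function.Injective (fun q : ℤ×ℤ => (q.1, q.2 - 1)) := by
      intro p q h
      simp only [Prod.mk.injEq] at h
      exact Prod.ext h.1 (by omega)
    rw [Ggen, Finset.mul_sum]
    refine Finset.sum_nbij' (fun I => (I.filter (fun q => 1 ≤ q.2)).image (fun q => (q.1, q.2 - 1)))
      (fun J => (J.image (fun q => (q.1, q.2 + 1))) ∪ col) ?_ ?_ ?_ ?_ ?_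
    · -- maps into gridIdeals (a+1) b
      intro I hI
      rw [Finset.mem_filter, mem_gridIdeals] at hI
      obtain ⟨⟨hIsub, hIideal⟩, haI⟩ := hI
      rw [mem_gridIdeals]
      constructor
      · intro r hr
        rw [Finset.mem_image] at hr
        obtain ⟨q, hq, rfl⟩ := hr
        rw [Finset.mem_filter] at hq
        have := hIsub hq.1
        rw [mem_gridZ] at this ⊢
        push_cast at this ⊢
        obtain ⟨h1, h2, h3, h4⟩ := this
        refine ⟨h1, by omega, by omega, by omega⟩
      · intro p' hp' q' hq' h1 h2
        rw [Finset.mem_image] at hp'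
        obtain ⟨p, hp, rfl⟩ := hp'
        rw [Finset.mem_filter] at hp
        have hqmem : (q'.1, q'.2 + 1) ∈ gridZ (a+1) (b+1) := by
          rw [mem_gridZ] at hq' ⊢
          push_cast at hq' ⊢
          omega
        have hqI : (q'.1, q'.2 + 1) ∈ I := by
          refine hIideal p hp.1 _ hqmem ?_ ?_
          · simpa using h1
          · have h2' : q'.2 ≤ p.2 - 1 := by simpa using h2
            show q'.2 + 1 ≤ p.2
            omega
        rw [Finset.mem_image]
        refine ⟨(q'.1, q'.2 + 1), ?_, by simp⟩
        rw [Finset.mem_filter]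
        refine ⟨hqI, ?_⟩
        show (1:ℤ) ≤ q'.2 + 1
        have := (mem_gridZ.mp hq').2.2.1
        omega
    · -- inverse maps into the filtered set
      intro J hJ
      rw [mem_gridIdeals] at hJ
      obtain ⟨hJsub, hJideal⟩ := hJ
      have hacol : ((a:ℤ), (0:ℤ)) ∈ col := by rw [mem_col]; exact ⟨by positivity, le_refl _, rfl⟩
      rw [Finset.mem_filter, mem_gridIdeals]
      refine ⟨⟨?_, ?_⟩, Finset.mem_union_right _ hacol⟩
      · intro r hr
        rcases Finset.mem_union.mp hr with h | h
        · rw [Finset.mem_image] at h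
          obtain ⟨q, hq, rfl⟩ := h
          have := hJsub hq
          rw [mem_gridZ] at this ⊢
          push_cast at this ⊢
          omega
        · rw [mem_col] at h
          rw [mem_gridZ]
          push_cast
          omega
      · intro p hp q hq h1 h2
        have hqg := hq
        rw [mem_gridZ] at hqg
        by_cases hq2 : q.2 = 0
        · refine Finset.mem_union_right _ ?_
          rw [mem_col]
          -- need q.1 ≤ a : q.1 < a+1
          refine ⟨hqg.1, by push_cast at hqg; omega, hq2⟩
        · have hq2' : 1 ≤ q.2 := by omega
          have hpimg : p ∈ J.image (fun q : ℤ×ℤ => (q.1, q.2 + 1)) := by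
            rcases Finset.mem_union.mp hp with h | h
            · exact h
            · exfalso
              rw [mem_col] at h
              omega
          rw [Finset.mem_image] at hpimg
          obtain ⟨r, hr, rfl⟩ := hpimg
          have hq'g : (q.1, q.2 - 1) ∈ gridZ (a+1) b := by
            rw [mem_gridZ]
            push_cast at hqg ⊢
            omega
          have : (q.1, q.2 - 1) ∈ J := by
            refine hJideal r hr _ hq'g ?_ ?_
            · simpa using h1
            · have h2' : q.2 ≤ r.2 + 1 := by simpa using h2
              show q.2 - 1 ≤ r.2
              omega
          refine Finset.mem_union_left _ ?_
          rw [Finset.mem_image]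
          exact ⟨(q.1, q.2 - 1), this, by simp⟩
    · -- left inverse
      intro I hI
      rw [Finset.mem_filter, mem_gridIdeals] at hI
      obtain ⟨⟨hIsub, hIideal⟩, haI⟩ := hI
      have hcolsub : col ⊆ I := by
        intro q hq
        rw [mem_col] at hq
        have hqg : q ∈ gridZ (a+1) (b+1) := by
          rw [mem_gridZ]
          push_cast
          omega
        exact hIideal _ haI q hqg (by simpa using hq.2.1) (by simp [hq.2.2])
      ext x
      simp only [Finset.mem_union, Finset.mem_image, Finset.mem_filter]
      constructor
      · intro hx
        rcases hx with ⟨q, ⟨p, ⟨hpI, hp2⟩, hpq⟩, hqx⟩ | hx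
        · subst hqx
          subst hpq
          simpa using hpI
        · exact hcolsub hx
      · intro hx
        have hxg := hIsub hx
        rw [mem_gridZ] at hxg
        by_cases hx2 : 1 ≤ x.2
        · left
          exact ⟨(x.1, x.2 - 1), ⟨x, ⟨hx, hx2⟩, rfl⟩, by simp⟩
        · right
          rw [mem_col]
          push_cast at hxg
          omega
    · -- right inverse
      intro J hJ
      rw [mem_gridIdeals] at hJ
      obtain ⟨hJsub, hJideal⟩ := hJ
      ext x
      simp only [Finset.mem_image, Finset.mem_filter, Finset.mem_union]
      constructor
      · rintro ⟨q, ⟨hq1, hq2⟩, rfl⟩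
        rcases hq1 with ⟨r, hr, rfl⟩ | hqcol
        · simpa using hr
        · exfalso
          rw [mem_col] at hqcol
          omega
      · intro hx
        have hxg := hJsub hx
        rw [mem_gridZ] at hxg
        refine ⟨(x.1, x.2 + 1), ⟨Or.inl ⟨x, hx, rfl⟩, by simp; omega⟩, by simp⟩
    · -- cardinalities
      intro I hI
      rw [Finset.mem_filter, mem_gridIdeals] at hI
      obtain ⟨⟨hIsub, hIideal⟩, haI⟩ := hI
      have hcolsub : col ⊆ I := by
        intro q hq
        rw [mem_col] at hq
        have hqg : q ∈ gridZ (a+1) (b+1) := by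
          rw [mem_gridZ]
          push_cast
          omega
        exact hIideal _ haI q hqg (by simpa using hq.2.1) (by simp [hq.2.2])
      have hIeq : I = (I.filter (fun q => 1 ≤ q.2)) ∪ col := by
        ext x
        simp only [Finset.mem_union, Finset.mem_filter]
        constructor
        · intro hx
          have hxg := hIsub hx
          rw [mem_gridZ] at hxg
          by_cases hx2 : 1 ≤ x.2
          · exact Or.inl ⟨hx, hx2⟩
          · right
            rw [mem_col]
            push_cast at hxg
            omega
        · rintro (⟨h, -⟩ | h)
          · exact h
          · exact hcolsub h
      have hdisj : Disjoint (I.filter (fun q => 1 ≤ q.2)) col := by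
        rw [Finset.disjoint_left]
        intro q hq hqc
        rw [Finset.mem_filter] at hq
        rw [mem_col] at hqc
        omega
      have hcard : I.card = (I.filter (fun q => 1 ≤ q.2)).card + (a+1) := by
        conv_lhs => rw [hIeq]
        rw [Finset.card_union_of_disjoint hdisj, card_col]
      rw [hcard, Finset.card_image_of_injective _ hdowninj, pow_add]
      ring
  -- ====== ideals avoiding (a,0) : they are exactly the ideals of gridZ a (b+1)
  · have : (gridIdeals (a+1) (b+1)).filter (fun I => ¬ ((a:ℤ), (0:ℤ)) ∈ I)
        = gridIdeals a (b+1) := by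
      ext I
      rw [Finset.mem_filter, mem_gridIdeals, mem_gridIdeals]
      constructor
      · rintro ⟨⟨hIsub, hIideal⟩, haI⟩
        have hsub' : I ⊆ gridZ a (b+1) := by
          intro p hp
          have hpg := hIsub hp
          rw [mem_gridZ] at hpg ⊢
          push_cast at hpg ⊢
          refine ⟨hpg.1, ?_, hpg.2.2⟩
          by_contra hcon
          have hpa : p.1 = (a:ℤ) := by omega
          have : ((a:ℤ), (0:ℤ)) ∈ I := by
            refine hIideal p hp ((a:ℤ), (0:ℤ)) ?_ ?_ ?_
            · rw [mem_gridZ]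
              push_cast
              refine ⟨by positivity, by omega, trivial, by omega⟩
            · show (a:ℤ) ≤ p.1
              omega
            · show (0:ℤ) ≤ p.2
              exact hpg.2.2.1
          exact haI this
        refine ⟨hsub', ?_⟩
        intro p hp q hq h1 h2
        refine hIideal p hp q ?_ h1 h2
        rw [mem_gridZ] at hq ⊢
        push_cast at hq ⊢
        omega
      · rintro ⟨hIsub, hIideal⟩
        have haI : ¬ ((a:ℤ), (0:ℤ)) ∈ I := by
          intro h
          have := hIsub h
          rw [mem_gridZ] at this
          exact absurd this.2.1 (lt_irrefl _)
        refine ⟨⟨?_, ?_⟩, haI⟩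
        · intro p hp
          have := hIsub hp
          rw [mem_gridZ] at this ⊢
          push_cast at this ⊢
          omega
        · intro p hp q hq h1 h2
          refine hIideal p hp q ?_ h1 h2
          have hpg := hIsub hp
          rw [mem_gridZ] at hq hpg ⊢
          push_cast at hq hpg ⊢
          omega
    rw [this, Ggen]


lemma qFact_zero : qFact 0 = 1 := by simp [qFact]

lemma qFact_succ (j : ℕ) : qFact (j+1) = qFact j * qInt (j+1) := by
  rw [qFact, qFact, Finset.prod_Icc_succ_top (by omega : 1 ≤ j + 1)]

lemma qInt_add (a b : ℕ) :
    qInt (a+b) = qInt a + Polynomial.X ^ a * qInt b := by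
  rw [qInt, qInt, qInt, Finset.sum_range_add, Finset.mul_sum]
  congr 1
  refine Finset.sum_congr rfl (fun t _ => ?_)
  rw [pow_add]

lemma Ggen_mul (a : ℕ) : ∀ b : ℕ, Ggen a b * (qFact a * qFact b) = qFact (a+b) := by
  induction a with
  | zero => intro b; simp [Ggen_zero_left, qFact_zero]
  | succ a iha =>
    intro b
    induction b with
    | zero => simp [Ggen_zero_right, qFact_zero]
    | succ b ihb =>
      have h1 : Ggen a (b+1) * (qFact a * (qFact b * qInt (b+1))) = qFact (a+b+1) := by
        have := iha (b+1)
        rw [qFact_succ b] at this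
        rw [show a + (b+1) = a+b+1 by omega] at this
        linear_combination this
      have h2 : Ggen (a+1) b * ((qFact a * qInt (a+1)) * qFact b) = qFact (a+b+1) := by
        rw [← qFact_succ a]
        rw [show a+b+1 = (a+1)+b by omega]
        exact ihb
      have e4 : qInt (a+b+1+1) = qInt (a+1) + Polynomial.X ^ (a+1) * qInt (b+1) := by
        rw [show a+b+1+1 = (a+1)+(b+1) by omega]
        exact qInt_add (a+1) (b+1)
      rw [Ggen_succ_succ, show a+1+(b+1) = (a+b+1)+1 by omega, qFact_succ (a+b+1),
        qFact_succ a, qFact_succ b, e4]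
      linear_combination qInt (a+1) * h1 + Polynomial.X ^ (a+1) * qInt (b+1) * h2

lemma mem_V3 {n : ℕ} {p : ℤ×ℤ×ℤ} :
    p ∈ V3 n ↔ (0 ≤ p.1 ∧ p.1 ≤ (n:ℤ)) ∧ (0 ≤ p.2.1 ∧ p.2.1 ≤ (n:ℤ)) ∧
      (0 ≤ p.2.2 ∧ p.2.2 ≤ (n:ℤ)) ∧ p.1 + p.2.1 + p.2.2 ≤ (n:ℤ) - 2 := by
  unfold V3
  simp only [Finset.mem_filter, Finset.mem_product, Finset.mem_Icc]
  tauto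

lemma step3_cases {W : Finset (ℤ×ℤ×ℤ)} {u v : ℤ×ℤ×ℤ}
    (h : step3 {vg, vo} W u v) :
    u ∈ W ∧ v ∈ W ∧ (v = u + vg ∨ v = u + vo) := by
  obtain ⟨hu, hv, e, he, rfl⟩ := h
  simp only [Set.mem_insert_iff, Set.mem_singleton_iff] at he
  rcases he with rfl | rfl
  · exact ⟨hu, hv, Or.inl rfl⟩
  · exact ⟨hu, hv, Or.inr rfl⟩

lemma step3_kappa {W : Finset (ℤ×ℤ×ℤ)} {u v : ℤ×ℤ×ℤ}
    (h : step3 {vg, vo} W u v) : v.1 + v.2.2 = u.1 + u.2.2 := by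
  obtain ⟨-, -, hor⟩ := step3_cases h
  rcases hor with rfl | rfl
  · simp [vg, Prod.fst_add, Prod.snd_add]
  · simp [vo, Prod.fst_add, Prod.snd_add]
    ring

def Ck (n k : ℕ) : Finset (ℤ×ℤ×ℤ) := (V3 n).filter (fun p => p.1 + p.2.2 = (k:ℤ))

lemma mem_Ck {n k : ℕ} (hk : k + 2 ≤ n) {p : ℤ×ℤ×ℤ} :
    p ∈ Ck n k ↔ ((p.2.2, p.2.1) ∈ gridZ (k+1) (n-1-k) ∧ p.1 = (k:ℤ) - p.2.2) := by
  rw [Ck, Finset.mem_filter, mem_V3, mem_gridZ]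
  simp only
  omega

lemma genF3_Ck {n k : ℕ} (hk : k + 2 ≤ n) :
    genF3 {vg, vo} (Ck n k) = Ggen (k+1) (n-1-k) := by
  have hfix : ∀ p ∈ Ck n k, ((k:ℤ) - p.2.2, p.2.1, p.2.2) = p := by
    intro p hp
    have h := (mem_Ck hk).mp hp
    rw [← h.2]
  rw [genF3, Ggen]
  refine Finset.sum_nbij' (fun J => J.image (fun p : ℤ×ℤ×ℤ => (p.2.2, p.2.1)))
    (fun I => I.image (fun q : ℤ×ℤ => ((k:ℤ) - q.1, q.2, q.1))) ?_ ?_ ?_ ?_ ?_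
  · -- forward map lands in gridIdeals
    intro J hJ
    rw [mem_ideals3] at hJ
    obtain ⟨hsub, hstepcl⟩ := (isIdeal3_iff_step _ _ _).mp hJ
    rw [mem_gridIdeals]
    refine isGridIdeal_of_steps ?_ ?_ ?_
    · intro r hr
      rw [Finset.mem_image] at hr
      obtain ⟨p, hp, rfl⟩ := hr
      exact ((mem_Ck hk).mp (hsub hp)).1
    · -- closed under decreasing the first coordinate (vo-steps)
      intro x y hg hin
      rw [Finset.mem_image] at hin
      obtain ⟨p, hpJ, hpe⟩ := hin
      have h22 : p.2.2 = x + 1 := congrArg Prod.fst hpe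
      have h21 : p.2.1 = y := congrArg Prod.snd hpe
      have hpC := (mem_Ck hk).mp (hsub hpJ)
      have huC : ((k:ℤ) - x, y, x) ∈ Ck n k := by
        rw [mem_Ck hk]
        exact ⟨hg, rfl⟩
      have hstepv : step3 {vg, vo} (Ck n k) ((k:ℤ) - x, y, x) p := by
        refine ⟨huC, hsub hpJ, vo, by simp, ?_⟩
        have : p = ((k:ℤ) - x + -1, y + 0, x + 1) := by
          have h1 : p.1 = (k:ℤ) - x + -1 := by rw [hpC.2, h22]; ring
          rw [← h1, ← h21, ← h22]
          simp
        rw [this]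
        simp [vo, Prod.ext_iff, Prod.fst_add, Prod.snd_add]
      have huJ : ((k:ℤ) - x, y, x) ∈ J := hstepcl _ _ hstepv hpJ
      rw [Finset.mem_image]
      exact ⟨_, huJ, rfl⟩
    · -- closed under decreasing the second coordinate (vg-steps)
      intro x y hg hin
      rw [Finset.mem_image] at hin
      obtain ⟨p, hpJ, hpe⟩ := hin
      have h22 : p.2.2 = x := congrArg Prod.fst hpe
      have h21 : p.2.1 = y + 1 := congrArg Prod.snd hpe
      have hpC := (mem_Ck hk).mp (hsub hpJ)
      have huC : ((k:ℤ) - x, y, x) ∈ Ck n k := by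
        rw [mem_Ck hk]
        exact ⟨hg, rfl⟩
      have hstepv : step3 {vg, vo} (Ck n k) ((k:ℤ) - x, y, x) p := by
        refine ⟨huC, hsub hpJ, vg, by simp, ?_⟩
        have : p = ((k:ℤ) - x + 0, y + 1, x + 0) := by
          have h1 : p.1 = (k:ℤ) - x + 0 := by rw [hpC.2, h22]; ring
          rw [← h1, ← h21]
          rw [show x + 0 = p.2.2 by omega]
        rw [this]
        simp [vg, Prod.ext_iff, Prod.fst_add, Prod.snd_add]
      have huJ : ((k:ℤ) - x, y, x) ∈ J := hstepcl _ _ hstepv hpJ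
      rw [Finset.mem_image]
      exact ⟨_, huJ, rfl⟩
  · -- backward map lands in ideals3
    intro I hI
    rw [mem_gridIdeals] at hI
    obtain ⟨hIsub, hIideal⟩ := hI
    rw [mem_ideals3, isIdeal3_iff_step]
    constructor
    · intro r hr
      rw [Finset.mem_image] at hr
      obtain ⟨q, hq, rfl⟩ := hr
      rw [mem_Ck hk]
      constructor
      · simpa using hIsub hq
      · rfl
    · intro u v hst hv
      obtain ⟨huC, hvC, hor⟩ := step3_cases hst
      rw [Finset.mem_image] at hv
      obtain ⟨q, hqI, hq⟩ := hv
      have hv22 : v.2.2 = q.1 := by rw [← hq]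
      have hv21 : v.2.1 = q.2 := by rw [← hq]
      have huCk := (mem_Ck hk).mp huC
      have hle1 : u.2.2 ≤ q.1 := by
        rw [← hv22]
        rcases hor with rfl | rfl
        · simp [vg, Prod.snd_add]
        · simp [vo, Prod.snd_add]
      have hle2 : u.2.1 ≤ q.2 := by
        rw [← hv21]
        rcases hor with rfl | rfl
        · simp [vg, Prod.snd_add, Prod.fst_add]
        · simp [vo, Prod.snd_add, Prod.fst_add]
      have hmem : (u.2.2, u.2.1) ∈ I := hIideal q hqI (u.2.2, u.2.1) huCk.1 hle1 hle2
      rw [Finset.mem_image]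
      refine ⟨(u.2.2, u.2.1), hmem, ?_⟩
      show ((k:ℤ) - u.2.2, u.2.1, u.2.2) = u
      exact hfix u huC
  · -- left inverse
    intro J hJ
    rw [mem_ideals3] at hJ
    have hsub := hJ.1
    simp only [Finset.image_image]
    ext x
    rw [Finset.mem_image]
    constructor
    · rintro ⟨p, hp, rfl⟩
      have e : ((k:ℤ) - (p.2.2, p.2.1).1, (p.2.2, p.2.1).2, (p.2.2, p.2.1).1) = p :=
        hfix p (hsub hp)
      exact e.symm ▸ hp
    · intro hx
      exact ⟨x, hx, hfix x (hsub hx)⟩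
  · -- right inverse
    intro I hI
    simp only [Finset.image_image]
    have : ((fun p : ℤ×ℤ×ℤ => (p.2.2, p.2.1)) ∘ (fun q : ℤ×ℤ => ((k:ℤ) - q.1, q.2, q.1))) = id := by
      funext q
      simp
    rw [this, Finset.image_id]
  · -- cards
    intro J hJ
    rw [mem_ideals3] at hJ
    have hsub := hJ.1
    congr 1
    rw [Finset.card_image_of_injOn]
    intro p1 h1 p2 h2 he
    have e1 := hfix p1 (hsub h1)
    have e2 := hfix p2 (hsub h2)
    have h22 : p1.2.2 = p2.2.2 := congrArg Prod.fst he
    have h21 : p1.2.1 = p2.2.1 := congrArg Prod.snd he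
    rw [← e1, ← e2, h22, h21]

def Wk (n m : ℕ) : Finset (ℤ×ℤ×ℤ) := (V3 n).filter (fun p => (m:ℤ) ≤ p.1 + p.2.2)

lemma Wk_zero (n : ℕ) : Wk n 0 = V3 n := by
  ext p
  rw [Wk, Finset.mem_filter]
  constructor
  · exact fun h => h.1
  · intro h
    have := mem_V3.mp h
    exact ⟨h, by push_cast; omega⟩

lemma Wk_empty {n m : ℕ} (h : n ≤ m + 1) : Wk n m = ∅ := by
  rw [Finset.eq_empty_iff_forall_notMem]
  intro p hp
  rw [Wk, Finset.mem_filter] at hp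
  have h1 := mem_V3.mp hp.1
  have h2 := hp.2
  omega

lemma Wk_split {n m : ℕ} (hm : m + 2 ≤ n) : Wk n m = Ck n m ∪ Wk n (m+1) := by
  ext p
  rw [Finset.mem_union, Wk, Ck, Wk, Finset.mem_filter, Finset.mem_filter, Finset.mem_filter]
  constructor
  · rintro ⟨h1, h2⟩
    by_cases hc : p.1 + p.2.2 = (m:ℤ)
    · exact Or.inl ⟨h1, hc⟩
    · exact Or.inr ⟨h1, by push_cast; omega⟩
  · rintro (⟨h1, h2⟩ | ⟨h1, h2⟩)
    · exact ⟨h1, le_of_eq h2.symm⟩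
    · exact ⟨h1, by push_cast at h2 ⊢; omega⟩

lemma Ck_disj_Wk {n m : ℕ} : Disjoint (Ck n m) (Wk n (m+1)) := by
  rw [Finset.disjoint_left]
  intro p hp hp2
  rw [Ck, Finset.mem_filter] at hp
  rw [Wk, Finset.mem_filter] at hp2
  have h1 := hp.2
  have h2 := hp2.2
  push_cast at h2
  omega

lemma hstep_Ck {n m : ℕ} :
    ∀ u v, step3 {vg, vo} (Ck n m ∪ Wk n (m+1)) u v → (u ∈ Ck n m ↔ v ∈ Ck n m) := by
  intro u v h
  have hk := step3_kappa h
  have hu := h.1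
  have hv := h.2.1
  have huV : u ∈ V3 n := by
    rcases Finset.mem_union.mp hu with h' | h'
    · exact (Finset.mem_filter.mp h').1
    · exact (Finset.mem_filter.mp h').1
  have hvV : v ∈ V3 n := by
    rcases Finset.mem_union.mp hv with h' | h'
    · exact (Finset.mem_filter.mp h').1
    · exact (Finset.mem_filter.mp h').1
  rw [Ck, Finset.mem_filter, Finset.mem_filter]
  constructor
  · rintro ⟨-, h2⟩
    exact ⟨hvV, by rw [hk]; exact h2⟩
  · rintro ⟨-, h2⟩
    exact ⟨huV, by rw [← hk]; exact h2⟩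

lemma genF3_Wk (n : ℕ) : ∀ d m : ℕ, n ≤ m + d + 1 →
    genF3 {vg, vo} (Wk n m) = ∏ k ∈ Finset.Ico m (n-1), Ggen (k+1) (n-1-k) := by
  intro d
  induction d with
  | zero =>
    intro m hm
    rw [Wk_empty (by omega), genF3_empty, Finset.Ico_eq_empty (by omega), Finset.prod_empty]
  | succ d ih =>
    intro m hm
    by_cases hc : n ≤ m + 1
    · rw [Wk_empty hc, genF3_empty, Finset.Ico_eq_empty (by omega), Finset.prod_empty]
    · have hm2 : m + 2 ≤ n := by omega
      rw [Wk_split hm2, genF3_split _ _ _ Ck_disj_Wk hstep_Ck, genF3_Ck hm2,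
        ih (m+1) (by omega), Finset.prod_eq_prod_Ico_succ_bot (show m < n-1 by omega)]

end AuxLemmas

/-- The rank generating function of `J(T_n({g,o}))` is `∏_{j=1}^{n} [n choose j]_q`;
equivalently (clearing denominators),
`F(J(T_n({g,o})),q) · ∏_{j=1}^{n} ([j]_q! · [n-j]_q!) = ([n]_q!)^n`. -/
theorem stmt5 (n : ℕ) (hn : 1 ≤ n) :
    genF3 {vg, vo} (V3 n) * ∏ j ∈ Finset.Icc 1 n, (qFact j * qFact (n - j)) =
      (qFact n) ^ n := by
  have h0 : genF3 {vg, vo} (V3 n) = ∏ k ∈ Finset.Ico 0 (n-1), Ggen (k+1) (n-1-k) := by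
    rw [← Wk_zero n]
    exact genF3_Wk n n 0 (by omega)
  have h1 : ∏ k ∈ Finset.Ico 0 (n-1), Ggen (k+1) (n-1-k)
      = ∏ j ∈ Finset.Ico 1 n, Ggen j (n-j) := by
    rw [Finset.prod_Ico_eq_prod_range (fun j => Ggen j (n-j)) 1 n]
    rw [show Finset.Ico 0 (n-1) = Finset.range (n-1) by rw [Finset.range_eq_Ico]]
    refine Finset.prod_congr rfl (fun k hk => ?_)
    congr 1 <;> omega
  have h2 : ∏ j ∈ Finset.Icc 1 n, (qFact j * qFact (n-j))
      = (∏ j ∈ Finset.Ico 1 n, (qFact j * qFact (n-j))) * (qFact n * qFact 0) := by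
    rw [← Finset.Ico_add_one_right_eq_Icc, Finset.prod_Ico_succ_top hn, Nat.sub_self]
  rw [h0, h1, h2, qFact_zero, mul_one, ← mul_assoc, ← Finset.prod_mul_distrib]
  have h3 : ∀ j ∈ Finset.Ico 1 n, Ggen j (n-j) * (qFact j * qFact (n-j)) = qFact n := by
    intro j hj
    rw [Finset.mem_Ico] at hj
    rw [Ggen_mul j (n-j), show j + (n-j) = n by omega]
  rw [Finset.prod_congr rfl h3, Finset.prod_const, Nat.card_Ico, ← pow_succ,
    show n - 1 + 1 = n by omega]
end
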